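/- Two isosceles triangles with base [0,1] and apexes z = 1/2 + (t/2)i and z' = 1/2 + (t'/2)i with t, t' > 0, t ≠ t', satisfy |z-ρ|/|z-ρ⁻¹| = |z'-ρ|/|z'-ρ⁻¹| if and only if t·t' = 3, where ρ = exp(πi/3). -/

import Mathlib

open Complex Real

noncomputable def ρ : ℂ := Complex.exp (Real.pi * Complex.I / 3)

lemma hrho : ρ = (1/2 : ℂ) + (Real.sqrt 3 / 2 : ℝ) * Complex.I := by
  have h : (Real.pi : ℂ) * Complex.I / 3 = ((Real.pi / 3 : ℝ) : ℂ) * Complex.I := by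
    push_cast; ring
  rw [ρ, h, Complex.exp_mul_I, ← Complex.ofReal_cos, ← Complex.ofReal_sin,
    Real.cos_pi_div_three, Real.sin_pi_div_three]
  push_cast; ring

lemma hrhoinv : ρ⁻¹ = (1/2 : ℂ) - (Real.sqrt 3 / 2 : ℝ) * Complex.I := by
  have h : -((Real.pi : ℂ) * Complex.I / 3) = ((-(Real.pi / 3) : ℝ) : ℂ) * Complex.I := by
    push_cast; ring
  rw [ρ, ← Complex.exp_neg, h, Complex.exp_mul_I, ← Complex.ofReal_cos, ← Complex.ofReal_sin,
    Real.cos_neg, Real.sin_neg, Real.cos_pi_div_three, Real.sin_pi_div_three]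
  push_cast; ring

lemma key (u : ℝ) (s : ℝ) :
    ‖(1/2 + (u/2 : ℝ) * Complex.I) - ((1/2 : ℂ) + (s/2 : ℝ) * Complex.I)‖
      = |u - s| / 2 := by
  have : (1/2 + (u/2 : ℝ) * Complex.I) - ((1/2 : ℂ) + (s/2 : ℝ) * Complex.I)
      = (((u - s)/2 : ℝ)) * Complex.I := by push_cast; ring
  rw [this, norm_mul, Complex.norm_I, Complex.norm_real, Real.norm_eq_abs, mul_one, abs_div]
  norm_num

theorem stmt13 (t t' : ℝ) (ht : 0 < t) (ht' : 0 < t') (hne : t ≠ t')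
    (z z' : ℂ) (hz : z = 1 / 2 + (t / 2 : ℝ) * Complex.I)
    (hz' : z' = 1 / 2 + (t' / 2 : ℝ) * Complex.I) :
    ‖z - ρ‖ / ‖z - ρ⁻¹‖ =
        ‖z' - ρ‖ / ‖z' - ρ⁻¹‖ ↔ t * t' = 3 := by
  set s := Real.sqrt 3 with hs
  have hs0 : 0 < s := by positivity
  have hs2 : s ^ 2 = 3 := Real.sq_sqrt (by norm_num)
  have h1 : ‖z - ρ‖ = |t - s| / 2 := by
    rw [hz, hrho, key]
  have h2 : ‖z' - ρ‖ = |t' - s| / 2 := by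
    rw [hz', hrho, key]
  have h3 : ‖z - ρ⁻¹‖ = (t + s) / 2 := by
    rw [hz, hrhoinv]
    have : (1/2 + (t/2 : ℝ) * Complex.I) - ((1/2 : ℂ) - (s/2 : ℝ) * Complex.I)
        = (((t + s)/2 : ℝ)) * Complex.I := by push_cast; ring
    rw [this, norm_mul, Complex.norm_I, Complex.norm_real, Real.norm_eq_abs, mul_one, abs_of_pos (by positivity)]
  have h4 : ‖z' - ρ⁻¹‖ = (t' + s) / 2 := by
    rw [hz', hrhoinv]
    have : (1/2 + (t'/2 : ℝ) * Complex.I) - ((1/2 : ℂ) - (s/2 : ℝ) * Complex.I)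
        = (((t' + s)/2 : ℝ)) * Complex.I := by push_cast; ring
    rw [this, norm_mul, Complex.norm_I, Complex.norm_real, Real.norm_eq_abs, mul_one, abs_of_pos (by positivity)]
  rw [h1, h2, h3, h4]
  have hp1 : (0:ℝ) < (t + s) / 2 := by positivity
  have hp2 : (0:ℝ) < (t' + s) / 2 := by positivity
  rw [div_eq_div_iff hp1.ne' hp2.ne']
  constructor
  · intro h
    rcases le_or_gt t s with hts | hts <;> rcases le_or_gt t' s with hts' | hts'
    · rw [abs_of_nonpos (by linarith), abs_of_nonpos (by linarith)] at h
      exfalso; apply hne; nlinarith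
    · rw [abs_of_nonpos (by linarith), abs_of_pos (by linarith)] at h
      nlinarith
    · rw [abs_of_pos (by linarith), abs_of_nonpos (by linarith)] at h
      nlinarith
    · rw [abs_of_pos (by linarith), abs_of_pos (by linarith)] at h
      exfalso; apply hne; nlinarith
  · intro h
    rcases le_or_gt t s with hts | hts <;> rcases le_or_gt t' s with hts' | hts'
    · have ha : t = s := by nlinarith
      have hb : t' = s := by nlinarith
      exact absurd (ha.trans hb.symm) hne
    · rw [abs_of_nonpos (by linarith), abs_of_pos (by linarith)]
      linear_combination hs2/2 - h/2
    · rw [abs_of_pos (by linarith), abs_of_nonpos (by linarith)]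
      linear_combination h/2 - hs2/2
    · exfalso
      have := mul_lt_mul hts (le_of_lt hts') hs0 (by linarith : (0:ℝ) ≤ t)
      nlinarith
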